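/- Regularization bias bound: suppose η ∈ H satisfies η(x₀) = 0, and let R_λ := (T_K + λI)^{-1} T_K. Then |(R_λ η)(x₀)| = |((R_λ - I)η)(x₀)| ≤ √λ · √(D(x₀;λ)) · ‖η‖_H, where D(x₀;λ) = ⟨K_{x₀}, (T_K+λI)^{-1} K_{x₀}⟩_H. -/

import Mathlib

open scoped RealInnerProductSpace

/-!
With `u = (T+λ)⁻¹ T η` and `w = (T+λ)⁻¹ K_{x₀}`, symmetry of `(T+λ)⁻¹` gives
`u(x₀) - η(x₀) = ⟪T η, w⟫ - ⟪η, K_{x₀}⟫ = -λ ⟪η, w⟫`. Cauchy–Schwarz bounds this by `λ ‖w‖ ‖η‖`,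
and positivity of `T` gives `λ ‖w‖² ≤ ⟪K_{x₀}, w⟫ = D(x₀;λ)`, i.e. `λ ‖w‖ ≤ √λ √D(x₀;λ)`.
-/

section ShiftedOperator

variable {H : Type*} [NormedAddCommGroup H] [InnerProductSpace ℝ H]
  {T : H →L[ℝ] H} {c : ℝ} {a b u w η : H}

theorem inner_eq_inner_of_shift_eq (hT : (T : H →ₗ[ℝ] H).IsSymmetric)
    (hu : T u + c • u = a) (hw : T w + c • w = b) : ⟪u, b⟫ = ⟪a, w⟫ := by
  rw [← hu, ← hw, inner_add_right, inner_add_left, real_inner_smul_right,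
    real_inner_smul_left]
  congr 1
  exact (hT u w).symm

theorem inner_sub_inner_eq_neg_mul_of_shift_eq (hT : (T : H →ₗ[ℝ] H).IsSymmetric)
    (hu : T u + c • u = T η) (hw : T w + c • w = b) :
    ⟪u, b⟫ - ⟪η, b⟫ = -(c * ⟪η, w⟫) := by
  have hTw : T w = b - c • w := eq_sub_of_add_eq hw
  have hTη : ⟪T η, w⟫ = ⟪η, T w⟫ := hT η w
  rw [inner_eq_inner_of_shift_eq hT hu hw, hTη, hTw, inner_sub_right,
    real_inner_smul_right]
  ring

theorem mul_norm_sq_le_inner_of_shift_eq (hpos : ∀ h : H, 0 ≤ ⟪h, T h⟫)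
    (hw : T w + c • w = b) : c * ‖w‖ ^ 2 ≤ ⟪b, w⟫ := by
  rw [← hw, inner_add_left, real_inner_smul_left, real_inner_self_eq_norm_sq,
    real_inner_comm]
  linarith [hpos w]

theorem mul_norm_le_sqrt_mul_sqrt_inner (hpos : ∀ h : H, 0 ≤ ⟪h, T h⟫) (hc : 0 ≤ c)
    (hw : T w + c • w = b) : c * ‖w‖ ≤ √c * √⟪b, w⟫ := by
  have hbw := mul_norm_sq_le_inner_of_shift_eq hpos hw
  calc c * ‖w‖ = √(c * (c * ‖w‖ ^ 2)) := by
        rw [← mul_assoc, ← sq, ← mul_pow, Real.sqrt_sq (by positivity)]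
    _ ≤ √(c * ⟪b, w⟫) := Real.sqrt_le_sqrt (mul_le_mul_of_nonneg_left hbw hc)
    _ = √c * √⟪b, w⟫ := Real.sqrt_mul hc _

end ShiftedOperator

/-- Regularization bias bound: if `η ∈ H` satisfies `η(x₀) = ⟪η, K_{x₀}⟫ = 0` and
`u = R_λ η = (T_K+λI)⁻¹ T_K η`, then
`|(R_λ η)(x₀)| = |((R_λ - I)η)(x₀)| ≤ √λ √(D(x₀;λ)) ‖η‖_H`, where
`D(x₀;λ) = ⟪K_{x₀}, (T_K+λI)⁻¹K_{x₀}⟫ = ⟪K_{x₀}, w⟫` with `(T_K+λI)w = K_{x₀}`. -/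
theorem stmt4
    {H : Type*} [NormedAddCommGroup H] [InnerProductSpace ℝ H]
    {X : Type*} (Kmap : X → H) (T : H →L[ℝ] H)
    (hsym : ∀ h g : H, ⟪T h, g⟫ = ⟪h, T g⟫)
    (hpos : ∀ h : H, 0 ≤ ⟪h, T h⟫)
    (lam : ℝ) (hlam : 0 < lam) (x₀ : X) (η u w : H)
    (hη0 : ⟪η, Kmap x₀⟫ = 0)
    (hu : T u + lam • u = T η)
    (hw : T w + lam • w = Kmap x₀) :
    |⟪u, Kmap x₀⟫| ≤ Real.sqrt lam * Real.sqrt ⟪Kmap x₀, w⟫ * ‖η‖ := by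
  have hbias : ⟪u, Kmap x₀⟫ = -(lam * ⟪η, w⟫) := by
    simpa [hη0] using inner_sub_inner_eq_neg_mul_of_shift_eq hsym hu hw
  calc |⟪u, Kmap x₀⟫| = lam * |⟪η, w⟫| := by
        rw [hbias, abs_neg, abs_mul, abs_of_pos hlam]
    _ ≤ lam * (‖η‖ * ‖w‖) := by gcongr; exact abs_real_inner_le_norm η w
    _ = lam * ‖w‖ * ‖η‖ := by ring
    _ ≤ Real.sqrt lam * Real.sqrt ⟪Kmap x₀, w⟫ * ‖η‖ :=
        mul_le_mul_of_nonneg_right (mul_norm_le_sqrt_mul_sqrt_inner hpos hlam.le hw)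
          (norm_nonneg η)
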